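/- Fix n ≥ 1, a₁,…,aₙ > 0, ε > 0, and C ≥ 0. Let κ : ℝ^{2n} → ℝ be a measurable function such that |κ(Z) − 1| ≤ C |Z|² for all Z with |Z| ≤ 2ε. Then there exists C' > 0 such that for all real p ≥ 1, | ∫_{B(0,2ε)} pⁿ e^{−2p |Z|²_a} κ(Z) dZ − ∏ⱼ (2π/aⱼ) | ≤ C'/p, where B(0,2ε) is the Euclidean ball of radius 2ε in ℝ^{2n}, |Z|²_a = ¼ Σⱼ aⱼ |zⱼ|² with zⱼ = Z_{2j−1} + i Z_{2j}, and dZ is the Lebesgue measure. -/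

import Mathlib

/-!
The Gaussian `g_p(Z) = pⁿ e^{-(p/2) Σ aⱼ|zⱼ|²}` has total mass `∏ⱼ 2π/aⱼ` for every `p`,
so the error is `∫ g_p w` with `w = 1_U κ − 1`, `U` the ball. Everywhere
`|w| ≤ B Σ aⱼ|zⱼ|²`: inside `U` by the hypothesis on `κ`, outside it because there
`|Z|² ≥ (2ε)²`. Since `u e^{-u} ≤ 2 e^{-u/2}`, the factor `Σ aⱼ|zⱼ|²` against `g_p` costs
`4/p` times the wider Gaussian `pⁿ e^{-(p/4) Σ aⱼ|zⱼ|²}`, whose mass `∏ⱼ 4π/aⱼ` is again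
independent of `p`.
-/

open MeasureTheory Complex Real

theorem integral_exp_neg_mul_normSq {b : ℝ} (hb : 0 < b) :
    ∫ z : ℂ, rexp (-(b * normSq z)) = π / b := by
  simpa [normSq_eq_norm_sq, finrank_real_complex] using
    GaussianFourier.integral_rexp_neg_mul_sq_norm (V := ℂ) hb

theorem mul_exp_neg_le_two_mul_exp_neg_half (u : ℝ) : u * rexp (-u) ≤ 2 * rexp (-(u / 2)) := by
  have hmax := Real.mul_exp_neg_le_exp_neg_one (u / 2)
  have hexp_neg_one : rexp (-1) ≤ 1 := Real.exp_le_one_iff.2 (by norm_num)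
  calc u * rexp (-u) = 2 * ((u / 2) * rexp (-(u / 2))) * rexp (-(u / 2)) := by
        rw [mul_assoc, mul_assoc, ← Real.exp_add]; ring_nf
    _ ≤ 2 * 1 * rexp (-(u / 2)) := by gcongr; linarith
    _ = 2 * rexp (-(u / 2)) := by ring

theorem abs_indicator_sub_one_le {E : Type*} {N κ : E → ℝ} {r C : ℝ} (hN : ∀ Z, 0 ≤ N Z)
    (hr : 0 < r) (hC : 0 ≤ C) (hκ : ∀ Z, N Z ≤ r → |κ Z - 1| ≤ C * N Z) (Z : E) :
    |{Z | N Z < r}.indicator κ Z - 1| ≤ (C + r⁻¹) * N Z := by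
  by_cases hZ : N Z < r
  · rw [Set.indicator_of_mem (show Z ∈ {Z | N Z < r} from hZ)]
    calc |κ Z - 1| ≤ C * N Z := hκ Z hZ.le
      _ ≤ (C + r⁻¹) * N Z := by gcongr; exacts [hN Z, le_add_of_nonneg_right (inv_pos.2 hr).le]
  · rw [Set.indicator_of_notMem (show Z ∉ {Z | N Z < r} from hZ), zero_sub, abs_neg, abs_one]
    calc (1 : ℝ) ≤ r⁻¹ * N Z := by rw [inv_mul_eq_div, one_le_div hr]; exact not_lt.1 hZ
      _ ≤ (C + r⁻¹) * N Z := by gcongr; exacts [hN Z, le_add_of_nonneg_left hC]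

section WeightedGaussian

variable {ι : Type*} [Fintype ι]

/-- `∑ⱼ aⱼ |zⱼ|²`; the paper's `|Z|²_a` is a quarter of it. -/
def weightedNormSq (a : ι → ℝ) (Z : ι → ℂ) : ℝ := ∑ j, a j * normSq (Z j)

variable {a : ι → ℝ} {p B : ℝ} {w : (ι → ℂ) → ℝ}

theorem continuous_weightedNormSq : Continuous (weightedNormSq a) := by
  unfold weightedNormSq
  fun_prop

theorem sum_normSq_le_mul_weightedNormSq (ha : ∀ j, 0 < a j) (Z : ι → ℂ) :
    ∑ j, normSq (Z j) ≤ (∑ j, (a j)⁻¹) * weightedNormSq a Z := by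
  rw [weightedNormSq, Finset.sum_mul_sum]
  refine Finset.sum_le_sum fun j _ => ?_
  calc normSq (Z j) = (a j)⁻¹ * (a j * normSq (Z j)) := by field_simp [(ha j).ne']
    _ ≤ ∑ k, (a j)⁻¹ * (a k * normSq (Z k)) :=
      Finset.single_le_sum (f := fun k => (a j)⁻¹ * (a k * normSq (Z k)))
        (fun k _ => mul_nonneg (inv_nonneg.2 (ha j).le) (mul_nonneg (ha k).le (normSq_nonneg _)))
        (Finset.mem_univ j)

theorem integral_exp_neg_mul_weightedNormSq (ha : ∀ j, 0 < a j) {t : ℝ}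
    (ht : 0 < t) : ∫ Z, rexp (-(t * weightedNormSq a Z)) = ∏ j, π / (t * a j) := by
  have hprod : ∀ Z : ι → ℂ,
      rexp (-(t * weightedNormSq a Z)) = ∏ j, rexp (-((t * a j) * normSq (Z j))) := by
    intro Z
    rw [← Real.exp_sum, weightedNormSq, Finset.mul_sum, ← Finset.sum_neg_distrib]
    simp only [mul_assoc]
  simp_rw [hprod]
  rw [integral_fintype_prod_volume_eq_prod (fun j (z : ℂ) => rexp (-((t * a j) * normSq z)))]
  exact Finset.prod_congr rfl fun j _ => integral_exp_neg_mul_normSq (mul_pos ht (ha j))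

theorem integrable_exp_neg_mul_weightedNormSq (ha : ∀ j, 0 < a j) {t : ℝ}
    (ht : 0 < t) : Integrable fun Z => rexp (-(t * weightedNormSq a Z)) := by
  refine Integrable.of_integral_ne_zero ?_
  rw [integral_exp_neg_mul_weightedNormSq ha ht]
  exact (Finset.prod_pos fun j _ => div_pos pi_pos (mul_pos ht (ha j))).ne'

theorem integral_pow_mul_exp_neg_div_mul_weightedNormSq (ha : ∀ j, 0 < a j)
    {p q : ℝ} (hp : 0 < p) (hq : 0 < q) :
    ∫ Z, p ^ Fintype.card ι * rexp (-(p / q * weightedNormSq a Z)) = ∏ j, q * π / a j := by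
  rw [integral_const_mul, integral_exp_neg_mul_weightedNormSq ha (div_pos hp hq),
    ← Finset.card_univ, ← Finset.prod_const, ← Finset.prod_mul_distrib]
  refine Finset.prod_congr rfl fun j _ => ?_
  field_simp [(ha j).ne']

theorem abs_gaussian_mul_le (hp : 0 < p) (hB : 0 ≤ B) {Z : ι → ℂ}
    (hw : |w Z| ≤ B * weightedNormSq a Z) :
    |p ^ Fintype.card ι * rexp (-(p / 2 * weightedNormSq a Z)) * w Z|
      ≤ 4 * B / p * (p ^ Fintype.card ι * rexp (-(p / 4 * weightedNormSq a Z))) := by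
  set Q := weightedNormSq a Z
  have hdecay : Q * rexp (-(p / 2 * Q)) ≤ 4 / p * rexp (-(p / 4 * Q)) := by
    have h := mul_exp_neg_le_two_mul_exp_neg_half (p / 2 * Q)
    rw [show p / 2 * Q / 2 = p / 4 * Q by ring] at h
    calc Q * rexp (-(p / 2 * Q)) = 2 / p * (p / 2 * Q * rexp (-(p / 2 * Q))) := by
          field_simp
      _ ≤ 2 / p * (2 * rexp (-(p / 4 * Q))) := by gcongr
      _ = 4 / p * rexp (-(p / 4 * Q)) := by ring
  rw [abs_mul, abs_of_pos (by positivity)]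
  calc p ^ Fintype.card ι * rexp (-(p / 2 * Q)) * |w Z|
      ≤ p ^ Fintype.card ι * rexp (-(p / 2 * Q)) * (B * Q) := by gcongr
    _ = B * p ^ Fintype.card ι * (Q * rexp (-(p / 2 * Q))) := by ring
    _ ≤ B * p ^ Fintype.card ι * (4 / p * rexp (-(p / 4 * Q))) := by gcongr
    _ = 4 * B / p * (p ^ Fintype.card ι * rexp (-(p / 4 * Q))) := by ring

theorem integrable_gaussian_mul (ha : ∀ j, 0 < a j) (hp : 0 < p) (hB : 0 ≤ B)
    (hwm : AEStronglyMeasurable w) (hw : ∀ Z, |w Z| ≤ B * weightedNormSq a Z) :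
    Integrable fun Z => p ^ Fintype.card ι * rexp (-(p / 2 * weightedNormSq a Z)) * w Z :=
  (((integrable_exp_neg_mul_weightedNormSq ha (by positivity : 0 < p / 4)).const_mul
    (p ^ Fintype.card ι)).const_mul (4 * B / p)).mono'
    (by have := continuous_weightedNormSq (a := a); fun_prop)
    (ae_of_all _ fun Z => abs_gaussian_mul_le hp hB (hw Z))

theorem abs_integral_gaussian_mul_le (ha : ∀ j, 0 < a j) (hp : 0 < p) (hB : 0 ≤ B)
    (hw : ∀ Z, |w Z| ≤ B * weightedNormSq a Z) :
    |∫ Z, p ^ Fintype.card ι * rexp (-(p / 2 * weightedNormSq a Z)) * w Z|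
      ≤ 4 * B / p * ∏ j, 4 * π / a j := by
  refine (norm_integral_le_of_norm_le ?_ (ae_of_all _ fun Z =>
    (Real.norm_eq_abs _).trans_le (abs_gaussian_mul_le hp hB (hw Z)))).trans_eq ?_
  · exact ((integrable_exp_neg_mul_weightedNormSq ha (by positivity : 0 < p / 4)).const_mul
      (p ^ Fintype.card ι)).const_mul (4 * B / p)
  · rw [integral_const_mul, integral_pow_mul_exp_neg_div_mul_weightedNormSq ha hp four_pos]

theorem abs_setIntegral_gaussian_mul_sub_le (ha : ∀ j, 0 < a j) (hp : 0 < p) (hB : 0 ≤ B)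
    {U : Set (ι → ℂ)} (hU : MeasurableSet U) {κ : (ι → ℂ) → ℝ} (hκ : Measurable κ)
    (hUκ : ∀ Z, |U.indicator κ Z - 1| ≤ B * weightedNormSq a Z) :
    |(∫ Z in U, p ^ Fintype.card ι * rexp (-(p / 2 * weightedNormSq a Z)) * κ Z)
      - ∏ j, 2 * π / a j| ≤ 4 * B / p * ∏ j, 4 * π / a j := by
  set g := fun Z => p ^ Fintype.card ι * rexp (-(p / 2 * weightedNormSq a Z))
  have hsplit :
      U.indicator (fun Z => g Z * κ Z) = fun Z => g Z + g Z * (U.indicator κ Z - 1) := by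
    ext Z
    by_cases hZ : Z ∈ U
    · simp only [Set.indicator_of_mem hZ]
      ring
    · simp only [Set.indicator_of_notMem hZ]
      ring
  rw [← integral_indicator hU, hsplit, integral_add,
    integral_pow_mul_exp_neg_div_mul_weightedNormSq ha hp two_pos, add_sub_cancel_left]
  · exact abs_integral_gaussian_mul_le ha hp hB hUκ
  · exact (integrable_exp_neg_mul_weightedNormSq ha (half_pos hp)).const_mul _
  · exact integrable_gaussian_mul ha hp hB
      ((hκ.indicator hU).sub_const 1).aestronglyMeasurable hUκ

end WeightedGaussian

theorem stmt_10_general (n : ℕ) (a : Fin n → ℝ) (ha : ∀ j, 0 < a j)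
    (ε : ℝ) (hε : 0 < ε) (C : ℝ) (hC : 0 ≤ C)
    (κ : (Fin n → ℂ) → ℝ) (hκmeas : Measurable κ)
    (hκ : ∀ Z : Fin n → ℂ, (∑ j, Complex.normSq (Z j)) ≤ (2 * ε) ^ 2 →
      |κ Z - 1| ≤ C * ∑ j, Complex.normSq (Z j)) :
    ∃ C' > 0, ∀ p : ℝ, 1 ≤ p →
      |(∫ Z in {Z : Fin n → ℂ | (∑ j, Complex.normSq (Z j)) < (2 * ε) ^ 2},
          p ^ n * Real.exp (-(2 * p * ((1 / 4) * ∑ j, a j * Complex.normSq (Z j)))) * κ Z)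
        - ∏ j, 2 * Real.pi / a j| ≤ C' / p := by
  set U := {Z : Fin n → ℂ | (∑ j, normSq (Z j)) < (2 * ε) ^ 2}
  set B := (C + ((2 * ε) ^ 2)⁻¹) * ∑ j, (a j)⁻¹
  have hB : 0 ≤ B := by
    have := Finset.sum_nonneg fun j (_ : j ∈ Finset.univ) => (inv_pos.2 (ha j)).le
    positivity
  have hUκ : ∀ Z, |U.indicator κ Z - 1| ≤ B * weightedNormSq a Z := fun Z =>
    (abs_indicator_sub_one_le (fun Z => Finset.sum_nonneg fun j _ => normSq_nonneg (Z j))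
      (by positivity) hC hκ Z).trans
      (by rw [mul_assoc]; gcongr; exact sum_normSq_le_mul_weightedNormSq ha Z)
  have hM : 0 ≤ ∏ j, 4 * π / a j := Finset.prod_nonneg fun j _ => by have := ha j; positivity
  refine ⟨4 * B * ∏ j, 4 * π / a j + 1, by positivity, fun p hp => ?_⟩
  have hp0 : 0 < p := by linarith
  have hintegrand :
      (fun Z => p ^ n * rexp (-(2 * p * ((1 / 4) * ∑ j, a j * normSq (Z j)))) * κ Z)
      = fun Z => p ^ Fintype.card (Fin n) * rexp (-(p / 2 * weightedNormSq a Z)) * κ Z := by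
    ext Z
    rw [Fintype.card_fin, weightedNormSq]
    ring_nf
  rw [hintegrand]
  calc _ ≤ 4 * B / p * ∏ j, 4 * π / a j := abs_setIntegral_gaussian_mul_sub_le ha hp0 hB
        (measurableSet_lt (by fun_prop) measurable_const) hκmeas hUκ
    _ ≤ _ := by rw [div_mul_eq_mul_div]; gcongr; linarith

/-- Fix `n ≥ 1`, `a₁,…,aₙ > 0`, `ε > 0` and `C ≥ 0`. Let
`κ : ℂⁿ = ℝ^{2n} → ℝ` be measurable with `|κ(Z) − 1| ≤ C |Z|²` for all `|Z| ≤ 2ε`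
(Euclidean norm, so `|Z|² = Σⱼ |zⱼ|²`). Then there is `C' > 0` such that for all real
`p ≥ 1`, `|∫_{B(0,2ε)} pⁿ e^{−2p|Z|²_a} κ(Z) dZ − ∏ⱼ (2π/aⱼ)| ≤ C'/p`, where
`|Z|²_a = ¼ Σⱼ aⱼ |zⱼ|²` and the integral is over the Euclidean ball of radius `2ε`
with respect to the Lebesgue measure. -/
theorem stmt_10 (n : ℕ) (hn : 1 ≤ n) (a : Fin n → ℝ) (ha : ∀ j, 0 < a j)
    (ε : ℝ) (hε : 0 < ε) (C : ℝ) (hC : 0 ≤ C)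
    (κ : (Fin n → ℂ) → ℝ) (hκmeas : Measurable κ)
    (hκ : ∀ Z : Fin n → ℂ, (∑ j, Complex.normSq (Z j)) ≤ (2 * ε) ^ 2 →
      |κ Z - 1| ≤ C * ∑ j, Complex.normSq (Z j)) :
    ∃ C' > 0, ∀ p : ℝ, 1 ≤ p →
      |(∫ Z in {Z : Fin n → ℂ | (∑ j, Complex.normSq (Z j)) < (2 * ε) ^ 2},
          p ^ n * Real.exp (-(2 * p * ((1 / 4) * ∑ j, a j * Complex.normSq (Z j)))) * κ Z)
        - ∏ j, 2 * Real.pi / a j| ≤ C' / p :=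
  stmt_10_general n a ha ε hε C hC κ hκmeas hκ
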